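/- Define d n := b n · b (n+5) − b (n+2) · b (n+3). Then for every n ≥ 0: if 3 divides n then d n = 3 · b (n+1) · b (n+4), and otherwise d n = b (n+1) · b (n+4). (The initial terms force the coefficient 3 to occur exactly when n ≡ 0 mod 3, e.g. d 0 = −9 = 3·b 1·b 4 and d 2 = −17 = b 3 · b 6.) -/
import Mathlib


/-- The ECHO sequence. -/
def echo : ℕ → ℚ
  | 0 => 1
  | 1 => 1
  | 2 => 2
  | 3 => 1
  | n + 4 =>
      (echo (n + 3) * echo (n + 1) - (if 3 ∣ (n + 4) then 3 else 1) * echo (n + 2) ^ 2) /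
        echo n

/-- The derived sequence d. -/
def dseq (n : ℕ) : ℚ := echo n * echo (n + 5) - echo (n + 2) * echo (n + 3)


def rt : ℕ → ZMod 5
  | 0 => 1 | 1 => 1 | 2 => 2 | 3 => 1 | 4 => 2 | 5 => 3 | 6 => 3 | 7 => 2
  | 8 => 1 | 9 => 2 | 10 => 1 | 11 => 1 | 12 => 4 | 13 => 4 | 14 => 3 | 15 => 4
  | 16 => 3 | 17 => 2 | 18 => 2 | 19 => 3 | 20 => 4 | 21 => 3 | 22 => 4 | _ => 4

def rr (n : ℕ) : ZMod 5 := rt (n % 24)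

lemma rt_ne_zero : ∀ k < 24, rt k ≠ 0 := by decide

lemma rr_ne_zero (n : ℕ) : rr n ≠ 0 := by
  have h : n % 24 < 24 := Nat.mod_lt _ (by norm_num)
  exact rt_ne_zero _ h

lemma rt_rec : ∀ k < 24, rt ((k+4)%24) * rt k
    = rt ((k+3)%24) * rt ((k+1)%24) - (if 3 ∣ (k+4) then (3 : ZMod 5) else 1) * rt ((k+2)%24)^2 := by
  decide

lemma rr_rec (n : ℕ) : rr (n+4) * rr n
    = rr (n+3) * rr (n+1) - (if 3 ∣ (n+4) then (3 : ZMod 5) else 1) * rr (n+2)^2 := by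
  have h : n % 24 < 24 := Nat.mod_lt _ (by norm_num)
  have e1 : (n+1) % 24 = (n % 24 + 1) % 24 := by omega
  have e2 : (n+2) % 24 = (n % 24 + 2) % 24 := by omega
  have e3 : (n+3) % 24 = (n % 24 + 3) % 24 := by omega
  have e4 : (n+4) % 24 = (n % 24 + 4) % 24 := by omega
  have h3 : (3 ∣ (n+4)) ↔ (3 ∣ (n % 24 + 4)) := by omega
  unfold rr
  rw [e1, e2, e3, e4]
  simp only [h3]
  exact rt_rec _ h

instance : Fact (Nat.Prime 5) := ⟨by norm_num⟩

def Pinv (n : ℕ) : Prop :=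
  ∃ a q : ℤ, ((q : ZMod 5) ≠ 0) ∧ ((q : ℚ) * echo n = (a : ℚ)) ∧ ((a : ZMod 5) = rr n * (q : ZMod 5))

lemma echo_rec_def (n : ℕ) : echo (n + 4)
    = (echo (n + 3) * echo (n + 1) - (if 3 ∣ (n + 4) then 3 else 1) * echo (n + 2) ^ 2) / echo n := by
  rfl

lemma P0 : Pinv 0 := ⟨1, 1, by decide, by norm_num [echo], by decide⟩
lemma P1 : Pinv 1 := ⟨1, 1, by decide, by norm_num [echo], by decide⟩
lemma P2 : Pinv 2 := ⟨2, 1, by decide, by norm_num [echo], by decide⟩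
lemma P3 : Pinv 3 := ⟨1, 1, by decide, by norm_num [echo], by decide⟩

lemma Pinv_ne_zero {n : ℕ} (h : Pinv n) : echo n ≠ 0 := by
  obtain ⟨a, q, hq, he, hrr⟩ := h
  intro h0
  rw [h0, mul_zero] at he
  have ha : a = 0 := by exact_mod_cast he.symm
  rw [ha] at hrr
  exact (mul_ne_zero (rr_ne_zero n) hq) (by exact_mod_cast hrr.symm)

lemma Pstep (n : ℕ) (h0 : Pinv n) (h1 : Pinv (n+1)) (h2 : Pinv (n+2)) (h3 : Pinv (n+3)) :
    Pinv (n+4) := by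
  have hne := Pinv_ne_zero h0
  obtain ⟨a0, q0, hq0, he0, hr0⟩ := h0
  obtain ⟨a1, q1, hq1, he1, hr1⟩ := h1
  obtain ⟨a2, q2, hq2, he2, hr2⟩ := h2
  obtain ⟨a3, q3, hq3, he3, hr3⟩ := h3
  have ha0 : (a0 : ZMod 5) ≠ 0 := by rw [hr0]; exact mul_ne_zero (rr_ne_zero n) hq0
  set cI : ℤ := if 3 ∣ (n+4) then 3 else 1 with hcI
  refine ⟨q0*(a3*a1*q2^2 - cI*(a2^2*(q1*q3))), a0*(q1*(q2^2*q3)), ?_, ?_, ?_⟩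
  · push_cast
    exact mul_ne_zero ha0 (mul_ne_zero hq1 (mul_ne_zero (pow_ne_zero 2 hq2) hq3))
  · have hq0' : (q0 : ℚ) ≠ 0 := by
      exact_mod_cast fun h => hq0 (by rw [show q0 = 0 from by exact_mod_cast h]; simp)
    have hq1' : (q1 : ℚ) ≠ 0 := by
      exact_mod_cast fun h => hq1 (by rw [show q1 = 0 from by exact_mod_cast h]; simp)
    have hq2' : (q2 : ℚ) ≠ 0 := by
      exact_mod_cast fun h => hq2 (by rw [show q2 = 0 from by exact_mod_cast h]; simp)
    have hq3' : (q3 : ℚ) ≠ 0 := by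
      exact_mod_cast fun h => hq3 (by rw [show q3 = 0 from by exact_mod_cast h]; simp)
    have hb4 : echo (n+4) * echo n
        = echo (n+3) * echo (n+1) - (cI : ℚ) * echo (n+2)^2 := by
      rw [echo_rec_def, div_mul_cancel₀ _ hne]
      congr 1
      rw [hcI]
      split <;> norm_num
    push_cast
    linear_combination (-(q1:ℚ)*q2^2*q3*echo (n+4)) * he0 + ((q0:ℚ)*q1*q2^2*q3) * hb4
      + ((q0:ℚ)*q2^2*q1*echo (n+1)) * he3 + ((q0:ℚ)*q2^2*a3) * he1
      + (-(q0:ℚ)*cI*q1*q3*((q2:ℚ)*echo (n+2)+a2)) * he2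
  · have hc : ((cI : ℤ) : ZMod 5) = (if 3 ∣ (n+4) then (3 : ZMod 5) else 1) := by
      rw [hcI]; split <;> norm_num
    push_cast
    rw [hc, hr0, hr1, hr2, hr3]
    linear_combination (-(q0:ZMod 5)*q1*q2^2*q3) * rr_rec n

lemma Pinv_all : ∀ n, Pinv n := by
  have key : ∀ n, Pinv n ∧ Pinv (n+1) ∧ Pinv (n+2) ∧ Pinv (n+3) := by
    intro n
    induction n with
    | zero => exact ⟨P0, P1, P2, P3⟩
    | succ k ih => exact ⟨ih.2.1, ih.2.2.1, ih.2.2.2,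
        Pstep k ih.1 ih.2.1 ih.2.2.1 ih.2.2.2⟩
  exact fun n => (key n).1

lemma echo_ne_zero (n : ℕ) : echo n ≠ 0 := Pinv_ne_zero (Pinv_all n)

def C (n : ℕ) : ℚ := if 3 ∣ n then 3 else 1

lemma C_period (n : ℕ) : C (n + 3) = C n := by
  unfold C
  have : (3 ∣ n + 3) ↔ (3 ∣ n) := by omega
  simp only [this]

lemma echo_R (n : ℕ) : echo (n+4) * echo n
    = echo (n+3) * echo (n+1) - C (n+4) * echo (n+2)^2 := by
  rw [echo_rec_def, div_mul_cancel₀ _ (echo_ne_zero n)]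
  rfl

lemma echo_E : ∀ n, C (n+1) * echo (n+2)^3 + C (n+2) * echo n * echo (n+3)^2
    + C n * echo (n+1)^2 * echo (n+4) = 0 := by
  intro n
  induction n with
  | zero =>
    have h4 : echo 4 = -3 := by
      rw [show (4:ℕ) = 0 + 4 from rfl, echo_rec_def]
      norm_num [echo]
    norm_num [echo, C, h4]
  | succ k ih =>
    have hR0 := echo_R k
    have hR1 := echo_R (k+1)
    have hne := echo_ne_zero (k+1)
    have key : echo (k+1) * (C (k+2) * echo (k+3)^3 + C (k+3) * echo (k+1) * echo (k+4)^2
        + C (k+1) * echo (k+2)^2 * echo (k+5)) = 0 := by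
      have e1 : C (k+3) = C k := C_period k
      have e2 : C (k+4) = C (k+1) := C_period (k+1)
      have e3 : C (k+5) = C (k+2) := C_period (k+2)
      rw [e1]
      rw [e2] at hR0
      rw [show k+1+4 = k+5 from rfl, show k+1+3 = k+4 from rfl, show k+1+2 = k+3 from rfl,
        show k+1+1 = k+2 from rfl, e3] at hR1
      linear_combination (echo (k+4)) * ih - (C (k+2) * echo (k+3)^2) * hR0
        + (C (k+1) * echo (k+2)^2) * hR1
    have := (mul_eq_zero.mp key).resolve_left hne
    linarith [this]

lemma dseq_formula (n : ℕ) : dseq n = C n * echo (n+1) * echo (n+4) := by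
  have hR0 := echo_R n
  have hR1 := echo_R (n+1)
  have hE := echo_E n
  have hne := echo_ne_zero (n+1)
  rw [show n+1+4 = n+5 from rfl, show n+1+3 = n+4 from rfl, show n+1+2 = n+3 from rfl,
    show n+1+1 = n+2 from rfl, C_period (n+2)] at hR1
  rw [C_period (n+1)] at hR0
  have key : echo (n+1) * (dseq n - C n * echo (n+1) * echo (n+4)) = 0 := by
    unfold dseq
    linear_combination (echo n) * hR1 + (echo (n+2)) * hR0 - hE
  have := (mul_eq_zero.mp key).resolve_left hne
  linarith [this]

/-- d n = 3 · b (n+1) · b (n+4) when 3 ∣ n, and d n = b (n+1) · b (n+4) otherwise. -/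
theorem echo_d_formula :
    ∀ n : ℕ,
      (3 ∣ n → dseq n = 3 * echo (n + 1) * echo (n + 4)) ∧
        (¬ 3 ∣ n → dseq n = echo (n + 1) * echo (n + 4)) := by
  intro n
  have h := dseq_formula n
  constructor
  · intro h3
    rw [show C n = 3 from if_pos h3] at h
    linarith [h]
  · intro h3
    rwa [show C n = 1 from if_neg h3, one_mul] at h
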